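/- (Uniqueness of the Lax-Friedrichs approximation.) Assume H is ℓ¹-Lipschitz in p with constant L, Lipschitz in u with some constant L_u, and nondecreasing in u; assume θ > 0 and β ≥ L/2, so that the Lax-Friedrichs operator is monotone. If U and V are grid functions that both satisfy Ĥ_LF[·]_α = 0 at every interior index α and both equal g(x_α) at every boundary index α, then U_α = V_α for every grid index α. -/
import Mathlib


open Finset

/-- `α` is an interior index: `0 < α i < J i` for all `i`. -/
def isInterior {d : ℕ} (J : Fin d → ℤ) (α : Fin d → ℤ) : Prop :=
  ∀ i, 0 < α i ∧ α i < J i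

/-- `α` is a grid index: `0 ≤ α i ≤ J i` for all `i`. -/
def isGrid {d : ℕ} (J : Fin d → ℤ) (α : Fin d → ℤ) : Prop :=
  ∀ i, 0 ≤ α i ∧ α i ≤ J i

/-- `α` is a boundary index: a grid index with `α i ∈ {0, J i}` for some `i`. -/
def isBoundary {d : ℕ} (J : Fin d → ℤ) (α : Fin d → ℤ) : Prop :=
  isGrid J α ∧ ∃ i, α i = 0 ∨ α i = J i

instance {d : ℕ} (J α : Fin d → ℤ) : Decidable (isInterior J α) :=
  inferInstanceAs (Decidable (∀ i, 0 < α i ∧ α i < J i))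

instance {d : ℕ} (J α : Fin d → ℤ) : Decidable (isGrid J α) :=
  inferInstanceAs (Decidable (∀ i, 0 ≤ α i ∧ α i ≤ J i))

/-- The grid node `x_α = a + (α₁h₁, …, α_dh_d)`. -/
noncomputable def xpt {d : ℕ} (a h : Fin d → ℝ) (α : Fin d → ℤ) : Fin d → ℝ :=
  fun i => a i + (α i : ℝ) * h i

/-- Second central difference `δᵢ² U_α = (U_{α+eᵢ} − 2U_α + U_{α−eᵢ})/hᵢ²`. -/
noncomputable def delta2 {d : ℕ} (h : Fin d → ℝ) (U : (Fin d → ℤ) → ℝ) (i : Fin d)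
    (α : Fin d → ℤ) : ℝ :=
  (U (α + Pi.single i 1) - 2 * U α + U (α - Pi.single i 1)) / (h i) ^ 2

/-- Central discrete gradient `∇_h U_α`. -/
noncomputable def gradh {d : ℕ} (h : Fin d → ℝ) (U : (Fin d → ℤ) → ℝ) (α : Fin d → ℤ) :
    Fin d → ℝ :=
  fun i => (U (α + Pi.single i 1) - U (α - Pi.single i 1)) / (2 * h i)

/-- Lax-Friedrichs operator
`Ĥ_LF[U]_α = −β Σᵢ hᵢ δᵢ² U_α + H(∇_h U_α, U_α, x_α) + θ U_α`. -/
noncomputable def HLF {d : ℕ} (h : Fin d → ℝ) (H : (Fin d → ℝ) → ℝ → (Fin d → ℝ) → ℝ)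
    (θ β : ℝ) (a : Fin d → ℝ) (U : (Fin d → ℤ) → ℝ) (α : Fin d → ℤ) : ℝ :=
  -β * (∑ i, h i * delta2 h U i α) + H (gradh h U α) (U α) (xpt a h α) + θ * U α

/-- per-coordinate elementary inequality -/
lemma lf_perterm (β L hi s t : ℝ) (hL : 0 ≤ L) (hβ : L / 2 ≤ β) (hi0 : 0 < hi)
    (hs : s ≤ 0) (ht : t ≤ 0) :
    β * ((s + t) / hi) + L * |(t - s) / (2 * hi)| ≤ 0 := by
  have habs : |(t - s) / (2 * hi)| = |t - s| / (2 * hi) := by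
    have h2hi : |2 * hi| = 2 * hi := abs_of_pos (by linarith)
    rw [abs_div, h2hi]
  have h1 : |t - s| ≤ -s - t := by
    rcases abs_cases (t - s) with ⟨he, _⟩ | ⟨he, _⟩ <;> linarith
  rw [habs]
  have key : β * (s + t) + L * (|t - s| / 2) ≤ 0 := by
    nlinarith [mul_le_mul_of_nonneg_left h1 hL,
      mul_nonneg (sub_nonneg.mpr hβ) (neg_nonneg.mpr (by linarith : s + t ≤ 0))]
  have heq : β * ((s + t) / hi) + L * (|t - s| / (2 * hi))
      = (β * (s + t) + L * (|t - s| / 2)) / hi := by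
    field_simp
  rw [heq]
  exact div_nonpos_of_nonpos_of_nonneg key hi0.le

/-- Comparison: any two solutions satisfy `U ≤ V` on the grid. -/
lemma lf_le {d : ℕ} (hd : 0 < d)
    (J : Fin d → ℤ)
    (h : Fin d → ℝ) (hh : ∀ i, 0 < h i) (a : Fin d → ℝ)
    (H : (Fin d → ℝ) → ℝ → (Fin d → ℝ) → ℝ)
    (θ : ℝ) (hθ : 0 < θ) (β : ℝ) (g : (Fin d → ℝ) → ℝ)
    (L : ℝ)
    (hLip : ∀ (p q : Fin d → ℝ) (v : ℝ) (x : Fin d → ℝ),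
      |H p v x - H q v x| ≤ L * ∑ i, |p i - q i|)
    (hmono : ∀ (p : Fin d → ℝ) (x : Fin d → ℝ), Monotone fun v => H p v x)
    (hβ : L / 2 ≤ β)
    (U V : (Fin d → ℤ) → ℝ)
    (hU1 : ∀ α, isInterior J α → HLF h H θ β a U α = 0)
    (hU2 : ∀ α, isBoundary J α → U α = g (xpt a h α))
    (hV1 : ∀ α, isInterior J α → HLF h H θ β a V α = 0)
    (hV2 : ∀ α, isBoundary J α → V α = g (xpt a h α)) :
    ∀ α, isGrid J α → U α ≤ V α := by
  classical
  by_contra hcon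
  push_neg at hcon
  obtain ⟨α0, hα0g, hα0⟩ := hcon
  have hL : 0 ≤ L := by
    have h1 := hLip 0 (Pi.single (⟨0, hd⟩ : Fin d) 1) 0 0
    have h2 : (∑ i : Fin d, |(0 : ℝ) - (Pi.single (⟨0, hd⟩ : Fin d) 1 : Fin d → ℝ) i|) = 1 := by
      simp [Pi.single_apply, apply_ite abs]
    simp only [Pi.zero_apply] at h1
    rw [h2, mul_one] at h1
    exact le_trans (abs_nonneg _) h1
  set G : Finset (Fin d → ℤ) := Fintype.piFinset (fun i => Finset.Icc 0 (J i)) with hG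
  have hmemG : ∀ γ : Fin d → ℤ, γ ∈ G ↔ isGrid J γ := by
    intro γ
    simp [hG, Fintype.mem_piFinset, Finset.mem_Icc, isGrid]
  have hGne : G.Nonempty := ⟨α0, (hmemG α0).mpr hα0g⟩
  obtain ⟨αm, hαmG, hmax⟩ := G.exists_max_image (fun γ => U γ - V γ) hGne
  have hmax' : ∀ γ ∈ G, U γ - V γ ≤ U αm - V αm := fun γ hγ => hmax γ hγ
  have hαmg : isGrid J αm := (hmemG αm).mp hαmG
  have hMpos : 0 < U αm - V αm :=
    lt_of_lt_of_le (sub_pos.mpr hα0) (hmax' α0 ((hmemG α0).mpr hα0g))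
  by_cases hb : ∃ i, αm i = 0 ∨ αm i = J i
  · have hbd : isBoundary J αm := ⟨hαmg, hb⟩
    have e1 := hU2 αm hbd
    have e2 := hV2 αm hbd
    linarith
  · have hInt : isInterior J αm := by
      intro i
      have h1 := hαmg i
      have h2 : ¬(αm i = 0 ∨ αm i = J i) := fun hc => hb ⟨i, hc⟩
      exact ⟨by omega, by omega⟩
    have hPle : ∀ i : Fin d,
        U (αm + Pi.single i 1) - V (αm + Pi.single i 1) ≤ U αm - V αm := by
      intro i
      apply hmax'
      rw [hmemG]
      intro j
      have h1 := hInt j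
      have h2 := hInt i
      simp only [Pi.add_apply, Pi.single_apply]
      by_cases hji : j = i <;> simp [hji] <;> omega
    have hQle : ∀ i : Fin d,
        U (αm - Pi.single i 1) - V (αm - Pi.single i 1) ≤ U αm - V αm := by
      intro i
      apply hmax'
      rw [hmemG]
      intro j
      have h1 := hInt j
      have h2 := hInt i
      simp only [Pi.sub_apply, Pi.single_apply]
      by_cases hji : j = i <;> simp [hji] <;> omega
    have e1 := hU1 αm hInt
    have e2 := hV1 αm hInt
    unfold HLF at e1 e2
    have hmonoterm : H (gradh h U αm) (V αm) (xpt a h αm)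
        ≤ H (gradh h U αm) (U αm) (xpt a h αm) :=
      hmono _ _ (by linarith : V αm ≤ U αm)
    have hlipterm : H (gradh h V αm) (V αm) (xpt a h αm)
        - H (gradh h U αm) (V αm) (xpt a h αm)
        ≤ L * ∑ i, |gradh h V αm i - gradh h U αm i| :=
      (le_abs_self _).trans (hLip _ _ _ _)
    have hterm : ∀ i : Fin d,
        β * (h i * delta2 h U i αm - h i * delta2 h V i αm)
          + L * |gradh h V αm i - gradh h U αm i| ≤ 0 := by
      intro i
      have hi0 : 0 < h i := hh i
      have hdel : h i * delta2 h U i αm - h i * delta2 h V i αm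
          = ((U (αm + Pi.single i 1) - V (αm + Pi.single i 1) - (U αm - V αm))
            + (U (αm - Pi.single i 1) - V (αm - Pi.single i 1) - (U αm - V αm))) / h i := by
        unfold delta2
        field_simp
        ring
      have hgrad : gradh h V αm i - gradh h U αm i
          = ((U (αm - Pi.single i 1) - V (αm - Pi.single i 1) - (U αm - V αm))
            - (U (αm + Pi.single i 1) - V (αm + Pi.single i 1) - (U αm - V αm))) / (2 * h i) := by
        unfold gradh
        field_simp
        ring
      rw [hdel, hgrad]
      exact lf_perterm β L (h i) _ _ hL hβ hi0
        (by linarith [hPle i]) (by linarith [hQle i])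
    have hsum2 : β * (∑ i, h i * delta2 h U i αm) - β * (∑ i, h i * delta2 h V i αm)
        + L * (∑ i, |gradh h V αm i - gradh h U αm i|) ≤ 0 := by
      have hrw : β * (∑ i, h i * delta2 h U i αm) - β * (∑ i, h i * delta2 h V i αm)
          + L * (∑ i, |gradh h V αm i - gradh h U αm i|)
          = ∑ i, (β * (h i * delta2 h U i αm - h i * delta2 h V i αm)
              + L * |gradh h V αm i - gradh h U αm i|) := by
        rw [Finset.mul_sum, Finset.mul_sum, Finset.mul_sum, ← Finset.sum_sub_distrib,
          ← Finset.sum_add_distrib]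
        exact Finset.sum_congr rfl fun i _ => by ring
      rw [hrw]
      exact Finset.sum_nonpos fun i _ => hterm i
    have hθM : 0 < θ * U αm - θ * V αm := by
      have := mul_pos hθ hMpos
      rw [mul_sub] at this
      linarith
    linarith [e1, e2, hlipterm, hmonoterm, hsum2, hθM]

/-- Uniqueness of the Lax-Friedrichs approximation: under the monotonicity
assumptions (`H` ℓ¹-Lipschitz in `p` with constant `L`, Lipschitz in `u`,
nondecreasing in `u`, `θ > 0`, `β ≥ L/2`), any two solutions of the
Lax-Friedrichs scheme agree at all grid indices. -/
theorem lax_friedrichs_unique {d : ℕ} (hd : 0 < d)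
    (J : Fin d → ℤ) (hJ : ∀ i, 2 ≤ J i)
    (h : Fin d → ℝ) (hh : ∀ i, 0 < h i) (a : Fin d → ℝ)
    (H : (Fin d → ℝ) → ℝ → (Fin d → ℝ) → ℝ)
    (θ : ℝ) (hθ : 0 < θ) (β : ℝ) (g : (Fin d → ℝ) → ℝ)
    (L Lu : ℝ)
    (hLip : ∀ (p q : Fin d → ℝ) (v : ℝ) (x : Fin d → ℝ),
      |H p v x - H q v x| ≤ L * ∑ i, |p i - q i|)
    (hLipu : ∀ (p : Fin d → ℝ) (v w : ℝ) (x : Fin d → ℝ),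
      |H p v x - H p w x| ≤ Lu * |v - w|)
    (hmono : ∀ (p : Fin d → ℝ) (x : Fin d → ℝ), Monotone fun v => H p v x)
    (hβ : L / 2 ≤ β)
    (U V : (Fin d → ℤ) → ℝ)
    (hU1 : ∀ α, isInterior J α → HLF h H θ β a U α = 0)
    (hU2 : ∀ α, isBoundary J α → U α = g (xpt a h α))
    (hV1 : ∀ α, isInterior J α → HLF h H θ β a V α = 0)
    (hV2 : ∀ α, isBoundary J α → V α = g (xpt a h α)) :
    ∀ α, isGrid J α → U α = V α := by
  intro α hα
  exact le_antisymm
    (lf_le hd J h hh a H θ hθ β g L hLip hmono hβ U V hU1 hU2 hV1 hV2 α hα)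
    (lf_le hd J h hh a H θ hθ β g L hLip hmono hβ V U hV1 hV2 hU1 hU2 α hα)
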